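/- Axiomatic characterization of complexity: let K' be a function from binary strings to ℕ such that (A1) for every partial computable function f from binary strings to binary strings there is a constant c with K'(f(x)) ≤ K'(x) + c whenever f(x) is defined; (A2) K' is upper semicomputable; (A3) there are real constants C ≥ c > 0 such that the number of strings x with K'(x) < n is at most C·2^n for all n, and at least c·2^n for all sufficiently large n. Then there is a constant d with |K'(x) − K(x)| ≤ d for all binary strings x. -/

import Mathlib

/-- Plain Kolmogorov complexity of `x` with respect to decompressor `D`. -/
noncomputable def Kc (D : List Bool →. List Bool) (x : List Bool) : ℕ∞ :=
  sInf {n : ℕ∞ | ∃ p : List Bool, x ∈ D p ∧ (p.length : ℕ∞) = n}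

/-- `U` is an optimal decompressor. -/
def OptimalDecompressor (U : List Bool →. List Bool) : Prop :=
  Partrec U ∧ ∀ D : List Bool →. List Bool, Partrec D →
    ∃ c : ℕ, ∀ x : List Bool, Kc U x ≤ Kc D x + (c : ℕ∞)

/-- `F` is upper semicomputable. -/
def UpperSemicomputable (F : List Bool → ℕ) : Prop :=
  ∃ k : List Bool × ℕ → ℕ, Computable k ∧
    (∀ x n, k (x, n + 1) ≤ k (x, n)) ∧
    (∀ x : List Bool, ∃ N : ℕ, ∀ n ≥ N, k (x, n) = F x)

/-!
Both bounds come from counting. Upper semicomputability makes the sets `{x | K' x < n}`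
enumerable uniformly in `n`. The `n`-th set has at most `2 ^ (n + m)` elements, so `x` is
determined by `n = K' x + 1` together with its position in the enumeration, written with exactly
`n + m` bits; this is a decompressor, whence `K ≤ K' + O(1)`. Conversely, the `(n + k₀)`-th set
has at least `2 ^ n` elements for every `n`, so a greedy procedure computably assigns to each
string `y` a string `x` of its own with `K' x < |y| + O(1)`. Conservation of information for the
inverse map `x ↦ y` gives `K' y ≤ |y| + O(1)`, and for `U` itself `K' (U p) ≤ K' p + O(1)`, which
together give `K' ≤ K + O(1)`.
-/

section Kc

variable {D : List Bool →. List Bool} {x : List Bool}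

lemma Kc_le_length {p : List Bool} (h : x ∈ D p) : Kc D x ≤ p.length :=
  sInf_le ⟨p, h, rfl⟩

lemma exists_mem_length_eq_Kc (h : Kc D x ≠ ⊤) : ∃ p, x ∈ D p ∧ (p.length : ℕ∞) = Kc D x := by
  have hne : {n : ℕ∞ | ∃ p : List Bool, x ∈ D p ∧ (p.length : ℕ∞) = n}.Nonempty :=
    Set.nonempty_iff_ne_empty.mpr fun he => h (by rw [Kc, he, sInf_empty])
  exact csInf_mem hne

lemma le_Kc_add {m d : ℕ} (h : ∀ p, x ∈ D p → m ≤ p.length + d) : (m : ℕ∞) ≤ Kc D x + d := by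
  by_cases hx : Kc D x = ⊤
  · simp [hx]
  obtain ⟨p, hp, hlen⟩ := exists_mem_length_eq_Kc hx
  rw [← hlen]
  exact_mod_cast h p hp

end Kc

lemma exists_le_two_pow_add {g : ℕ → ℕ} {C : ℝ} (h : ∀ n, (g n : ℝ) ≤ C * 2 ^ n) :
    ∃ m, ∀ n, g n ≤ 2 ^ (n + m) := by
  refine ⟨⌈C⌉₊, fun n => ?_⟩
  have hC : C ≤ 2 ^ ⌈C⌉₊ :=
    (Nat.le_ceil C).trans (by exact_mod_cast (Nat.lt_two_pow_self).le)
  have : (g n : ℝ) ≤ 2 ^ (n + ⌈C⌉₊) := by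
    rw [pow_add, mul_comm]
    exact (h n).trans (mul_le_mul_of_nonneg_right hC (by positivity))
  exact_mod_cast this

lemma exists_two_pow_le_add {g : ℕ → ℕ} {c : ℝ} {N : ℕ} (hc : 0 < c)
    (h : ∀ n ≥ N, c * 2 ^ n ≤ g n) : ∃ k, ∀ n, 2 ^ n ≤ g (n + k) := by
  obtain ⟨m, hm⟩ := pow_unbounded_of_one_lt c⁻¹ (one_lt_two : (1 : ℝ) < 2)
  refine ⟨m + N, fun n => ?_⟩
  have hcm : 1 ≤ c * 2 ^ m := by
    rw [inv_lt_iff_one_lt_mul₀ hc] at hm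
    linarith
  have : (2 : ℝ) ^ n ≤ g (n + (m + N)) := by
    refine le_trans ?_ (h _ (by omega))
    calc (2 : ℝ) ^ n ≤ c * 2 ^ m * 2 ^ n := le_mul_of_one_le_left (by positivity) hcm
      _ ≤ c * 2 ^ m * 2 ^ n * 2 ^ N :=
          le_mul_of_one_le_right (by positivity) (one_le_pow₀ one_le_two)
      _ = c * 2 ^ (n + (m + N)) := by ring
  exact_mod_cast this

lemma exists_length_eq_foldr_bit_eq {L i : ℕ} (h : i < 2 ^ L) :
    ∃ p : List Bool, p.length = L ∧ p.foldr Nat.bit 0 = i := by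
  induction L generalizing i with
  | zero => exact ⟨[], rfl, by simp_all⟩
  | succ L ih =>
    obtain ⟨p, hlen, hval⟩ := ih (i := i / 2) (by rw [pow_succ] at h; omega)
    refine ⟨i.bodd :: p, by simp [hlen], ?_⟩
    rw [List.foldr_cons, hval, ← Nat.div2_val, Nat.bit_bodd_div2]

lemma two_pow_le_foldr_bit_one (y : List Bool) : 2 ^ y.length ≤ y.foldr Nat.bit 1 := by
  induction y with
  | nil => simp
  | cons b y ih => simp only [List.foldr_cons, Nat.bit_val, List.length_cons, pow_succ]; omega

lemma foldr_bit_one_ne_zero (y : List Bool) : y.foldr Nat.bit 1 ≠ 0 :=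
  ((Nat.two_pow_pos _).trans_le (two_pow_le_foldr_bit_one y)).ne'

lemma foldr_bit_one_lt (y : List Bool) : y.foldr Nat.bit 1 < 2 ^ (y.length + 1) := by
  induction y with
  | nil => simp
  | cons b y ih =>
    simp only [List.foldr_cons, Nat.bit_val, List.length_cons, pow_succ] at ih ⊢
    cases b <;> simp <;> omega

lemma log_foldr_bit_one (y : List Bool) : Nat.log 2 (y.foldr Nat.bit 1) = y.length :=
  (Nat.log_eq_iff (.inr ⟨one_lt_two, foldr_bit_one_ne_zero y⟩)).mpr
    ⟨two_pow_le_foldr_bit_one y, foldr_bit_one_lt y⟩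

lemma bits_foldr_bit_one (y : List Bool) : (y.foldr Nat.bit 1).bits = y ++ [true] := by
  induction y with
  | nil => simp
  | cons b y ih =>
    rw [List.foldr_cons, Nat.bits_append_bit _ _ (absurd · (foldr_bit_one_ne_zero y)), ih,
      List.cons_append]

lemma foldr_bit_one_injective : Function.Injective fun y : List Bool => y.foldr Nat.bit 1 :=
  fun y y' h => List.append_cancel_right <| by
    simpa only [bits_foldr_bit_one] using congrArg Nat.bits h

lemma primrec_foldr_bit (n₀ : ℕ) : Primrec fun y : List Bool => y.foldr Nat.bit n₀ := by
  have hbit : Primrec₂ Nat.bit :=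
    (Primrec.cond Primrec.fst
      (Primrec.succ.comp (Primrec.nat_mul.comp (.const 2) .snd))
      (Primrec.nat_mul.comp (.const 2) .snd)).to₂
  exact Primrec.list_foldr .id (.const n₀)
    (hbit.comp (Primrec.fst.comp .snd) (Primrec.snd.comp .snd)).to₂

lemma Primrec.nat_log (b : ℕ) : Primrec (Nat.log b) := by
  rcases le_or_gt b 1 with hb | hb
  · exact (Primrec.const 0).of_eq fun n => (Nat.log_of_left_le_one hb n).symm
  have hpow : Primrec₂ ((· ^ ·) : ℕ → ℕ → ℕ) := Primrec₂.unpaired'.mp Nat.Primrec.pow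
  refine (Primrec.nat_findGreatest (p := fun n i => b ^ i ≤ n) .id
    (Primrec.nat_le.comp (hpow.comp (.const b) .snd) .fst)).of_eq fun n => ?_
  refine Nat.findGreatest_eq_iff.mpr ⟨Nat.log_le_self b n, fun h => ?_, fun i hi _ => ?_⟩
  · exact Nat.pow_log_le_self b fun hn => h (by simp [hn])
  · exact (Nat.lt_pow_of_log_lt hb hi).not_ge

lemma List.IsPrefix.getElem?_eq_some {α : Type*} {l l' : List α} (h : l <+: l') {i : ℕ} {a : α}
    (hi : l[i]? = some a) : l'[i]? = some a := by
  obtain ⟨hlt, rfl⟩ := List.getElem?_eq_some_iff.mp hi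
  exact List.prefix_iff_getElem?.mp h i hlt

lemma List.Nodup.eq_of_getElem?_eq_some {α : Type*} {l : List α} (h : l.Nodup) {i j : ℕ} {x : α}
    (hi : l[i]? = some x) (hj : l[j]? = some x) : i = j := by
  obtain ⟨hi', rfl⟩ := List.getElem?_eq_some_iff.mp hi
  obtain ⟨hj', hx⟩ := List.getElem?_eq_some_iff.mp hj
  exact (h.getElem_inj_iff.mp hx).symm

section SublevelEnum

variable {α : Type*} [Primcodable α]

structure IsSublevelEnum (F : α → ℕ) (E : ℕ → ℕ → List α) : Prop where
  computable : Computable₂ E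
  nodup (n s : ℕ) : (E n s).Nodup
  prefix_of_le (n : ℕ) {s s' : ℕ} : s ≤ s' → E n s <+: E n s'
  exists_mem_iff (n : ℕ) (x : α) : (∃ s, x ∈ E n s) ↔ F x < n

/-- `x` is emitted at time `⟨encode x, b⟩` exactly when `b` is the first stage with
`k (x, b) < n`, so that it is listed only once. -/
def firstBelow (k : α × ℕ → ℕ) (n t : ℕ) : Option α :=
  (Encodable.decode₂ α t.unpair.1).bind fun x =>
    if k (x, t.unpair.2) < n ∧ (t.unpair.2 = 0 ∨ n ≤ k (x, t.unpair.2 - 1)) then some x else none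

def sublevelEnum (k : α × ℕ → ℕ) (n s : ℕ) : List α :=
  (List.range s).filterMap (firstBelow k n)

variable {k : α × ℕ → ℕ}

lemma firstBelow_eq_some_iff {n t : ℕ} {x : α} :
    firstBelow k n t = some x ↔ Encodable.encode x = t.unpair.1 ∧
      k (x, t.unpair.2) < n ∧ (t.unpair.2 = 0 ∨ n ≤ k (x, t.unpair.2 - 1)) := by
  rw [firstBelow, Option.bind_eq_some_iff]
  simp only [Option.ite_none_right_eq_some, Option.some.injEq]
  constructor
  · rintro ⟨y, hy, hc, rfl⟩
    exact ⟨Encodable.mem_decode₂.mp hy, hc⟩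
  · rintro ⟨hx, hc⟩
    exact ⟨x, Encodable.mem_decode₂.mpr hx, hc, rfl⟩

lemma computable₂_firstBelow (hk : Computable k) : Computable₂ (firstBelow k) := by
  have hn : Computable fun q : (ℕ × ℕ) × α => q.1.1 := Computable.fst.comp .fst
  have hb : Computable fun q : (ℕ × ℕ) × α => q.1.2.unpair.2 :=
    Computable.snd.comp (Computable.unpair.comp (Computable.snd.comp .fst))
  have hkb : Computable fun q : (ℕ × ℕ) × α => k (q.2, q.1.2.unpair.2) := hk.comp (.pair .snd hb)
  have hkb' : Computable fun q : (ℕ × ℕ) × α => k (q.2, q.1.2.unpair.2 - 1) :=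
    hk.comp (.pair .snd (Primrec.pred.to_comp.comp hb))
  have hc : Computable fun q : (ℕ × ℕ) × α => decide (k (q.2, q.1.2.unpair.2) < q.1.1 ∧
      (q.1.2.unpair.2 = 0 ∨ q.1.1 ≤ k (q.2, q.1.2.unpair.2 - 1))) :=
    (Primrec.and.to_comp.comp (Primrec.nat_lt.decide.to_comp.comp hkb hn)
      (Primrec.or.to_comp.comp (Primrec.eq.decide.to_comp.comp hb (.const 0))
        (Primrec.nat_le.decide.to_comp.comp hn hkb'))).of_eq fun q => by simp
  have hg : Computable₂ fun (p : ℕ × ℕ) (x : α) =>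
      if k (x, p.2.unpair.2) < p.1 ∧ (p.2.unpair.2 = 0 ∨ p.1 ≤ k (x, p.2.unpair.2 - 1))
      then some x else none :=
    (Computable.cond hc (Computable.option_some.comp .snd) (.const none)).of_eq fun q => by
      simp only [Bool.cond_decide]
  exact (Computable.option_bind (Primrec.decode₂.to_comp.comp (Computable.fst.comp
    (Computable.unpair.comp .snd))) hg).to₂

lemma computable₂_sublevelEnum (hk : Computable k) : Computable₂ (sublevelEnum k) := by
  have hstep : Computable₂ fun (p : ℕ × ℕ) (q : ℕ × List α) =>
      q.2 ++ (firstBelow k p.1 q.1).toList :=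
    Computable.list_append.comp (Computable.snd.comp .snd)
      (Primrec.optionToList.to_comp.comp
        ((computable₂_firstBelow hk).comp (Computable.fst.comp .fst) (Computable.fst.comp .snd)))
  refine (Computable.nat_rec .snd (.const []) hstep).of_eq fun ⟨n, s⟩ => ?_
  induction s with
  | zero => rfl
  | succ s ih =>
    simp only at ih ⊢
    rw [ih, sublevelEnum, sublevelEnum, List.range_succ, List.filterMap_append]
    rcases h : firstBelow k n s <;> simp [h]

lemma sublevelEnum_prefix_of_le (n : ℕ) {s s' : ℕ} (h : s ≤ s') :
    sublevelEnum k n s <+: sublevelEnum k n s' := by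
  obtain ⟨d, rfl⟩ := Nat.exists_eq_add_of_le h
  rw [sublevelEnum, sublevelEnum, List.range_add, List.filterMap_append]
  exact List.prefix_append _ _

lemma nodup_sublevelEnum (hanti : ∀ x, Antitone fun b => k (x, b)) (n s : ℕ) :
    (sublevelEnum k n s).Nodup := by
  refine List.nodup_range.filterMap fun t t' x ht ht' => ?_
  rw [Option.mem_def, firstBelow_eq_some_iff] at ht ht'
  obtain ⟨ha, hlt, hfirst⟩ := ht
  obtain ⟨ha', hlt', hfirst'⟩ := ht'
  have hfirst_le {b b' : ℕ} (hb : k (x, b) < n) (hb' : b' = 0 ∨ n ≤ k (x, b' - 1)) : b' ≤ b := by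
    by_contra! h
    exact (hb'.resolve_left (by omega)).not_gt ((hanti x (Nat.le_sub_one_of_lt h)).trans_lt hb)
  rw [← Nat.pair_unpair t, ← Nat.pair_unpair t', ← ha, ← ha',
    le_antisymm (hfirst_le hlt hfirst') (hfirst_le hlt' hfirst)]

lemma isSublevelEnum_sublevelEnum {F : α → ℕ} (hk : Computable k)
    (hanti : ∀ x, Antitone fun b => k (x, b))
    (hF : ∀ x, IsLeast (Set.range fun b => k (x, b)) (F x)) :
    IsSublevelEnum F (sublevelEnum k) where
  computable := computable₂_sublevelEnum hk
  nodup := nodup_sublevelEnum hanti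
  prefix_of_le := sublevelEnum_prefix_of_le
  exists_mem_iff n x := by
    constructor
    · rintro ⟨s, hs⟩
      obtain ⟨t, -, ht⟩ := List.mem_filterMap.mp hs
      exact ((hF x).2 ⟨_, rfl⟩).trans_lt (firstBelow_eq_some_iff.mp ht).2.1
    · intro hx
      obtain ⟨b, hb⟩ := (hF x).1
      have hex : ∃ b, k (x, b) < n := ⟨b, hb.trans_lt hx⟩
      classical
      refine ⟨Nat.pair (Encodable.encode x) (Nat.find hex) + 1,
        List.mem_filterMap.mpr ⟨_, List.mem_range.mpr (Nat.lt_succ_self _), ?_⟩⟩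
      rw [firstBelow_eq_some_iff, Nat.unpair_pair]
      refine ⟨rfl, Nat.find_spec hex, ?_⟩
      rcases Nat.eq_zero_or_pos (Nat.find hex) with h | h
      · exact .inl h
      · exact .inr (not_lt.mp (Nat.find_min hex (by omega)))

end SublevelEnum

namespace IsSublevelEnum

variable {α : Type*} [Primcodable α] {F : α → ℕ} {E : ℕ → ℕ → List α}

lemma length_le_ncard (hE : IsSublevelEnum F E) {n : ℕ} (hfin : {x | F x < n}.Finite) (s : ℕ) :
    (E n s).length ≤ {x | F x < n}.ncard := by
  classical
  rw [← List.toFinset_card_of_nodup (hE.nodup n s), ← Set.ncard_coe_finset]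
  exact Set.ncard_le_ncard
    (fun x hx => (hE.exists_mem_iff n x).mp ⟨s, List.mem_toFinset.mp hx⟩) hfin

lemma exists_ncard_le_length (hE : IsSublevelEnum F E) {n : ℕ} (hfin : {x | F x < n}.Finite) :
    ∃ s, {x | F x < n}.ncard ≤ (E n s).length := by
  classical
  choose! stage hstage using fun x (hx : x ∈ hfin.toFinset) =>
    (hE.exists_mem_iff n x).mpr (hfin.mem_toFinset.mp hx)
  refine ⟨hfin.toFinset.sup stage, ?_⟩
  rw [← List.toFinset_card_of_nodup (hE.nodup n _), Set.ncard_eq_toFinset_card _ hfin]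
  exact Finset.card_le_card fun x hx =>
    List.mem_toFinset.mpr ((hE.prefix_of_le n (Finset.le_sup hx)).subset (hstage x hx))

end IsSublevelEnum

lemma UpperSemicomputable.exists_isSublevelEnum {F : List Bool → ℕ}
    (hF : UpperSemicomputable F) : ∃ E, IsSublevelEnum F E := by
  obtain ⟨k, hk, hsucc, hlim⟩ := hF
  have hanti (x : List Bool) : Antitone fun b => k (x, b) := antitone_nat_of_succ_le (hsucc x)
  refine ⟨sublevelEnum k, isSublevelEnum_sublevelEnum hk hanti fun x => ?_⟩
  obtain ⟨N, hN⟩ := hlim x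
  refine ⟨⟨N, hN N le_rfl⟩, ?_⟩
  rintro _ ⟨b, rfl⟩
  exact (hN (max N b) (le_max_left N b)).symm.trans_le (hanti x (le_max_right N b))

section IndexDecompressor

variable {F : List Bool → ℕ} {E : ℕ → ℕ → List (List Bool)}

/-- Reads `p` as the position, in binary, of the output in the enumeration of
`{x | F x < p.length - m}`. -/
def indexDecompressor (E : ℕ → ℕ → List (List Bool)) (m : ℕ) : List Bool →. List Bool :=
  fun p => Nat.rfindOpt fun s => (E (p.length - m) s)[p.foldr Nat.bit 0]?

lemma partrec_indexDecompressor (hE : Computable₂ E) (m : ℕ) :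
    Partrec (indexDecompressor E m) :=
  Partrec.rfindOpt (Computable.list_getElem?.comp
    (hE.comp (Primrec.nat_sub.to_comp.comp (Computable.list_length.comp .fst) (.const m)) .snd)
    ((primrec_foldr_bit 0).to_comp.comp .fst)).to₂

lemma IsSublevelEnum.Kc_indexDecompressor_le (hE : IsSublevelEnum F E) {m : ℕ}
    (hcard : ∀ n, {x | F x < n}.Finite ∧ {x | F x < n}.ncard ≤ 2 ^ (n + m)) (x : List Bool) :
    Kc (indexDecompressor E m) x ≤ F x + (1 + m : ℕ) := by
  obtain ⟨s, hs⟩ := (hE.exists_mem_iff (F x + 1) x).mpr (Nat.lt_succ_self _)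
  have hidx : (E (F x + 1) s).idxOf x < 2 ^ (F x + 1 + m) :=
    (List.idxOf_lt_length_iff.mpr hs).trans_le
      ((hE.length_le_ncard (hcard _).1 s).trans (hcard _).2)
  obtain ⟨p, hlen, hval⟩ := exists_length_eq_foldr_bit_eq hidx
  have hx : x ∈ indexDecompressor E m p := by
    refine (Nat.rfindOpt_mono fun hst ha => ?_).mpr ⟨s, ?_⟩
    · exact (hE.prefix_of_le _ hst).getElem?_eq_some ha
    · simpa [hlen, hval] using List.getElem?_idxOf hs
  calc Kc (indexDecompressor E m) x ≤ p.length := Kc_le_length hx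
    _ = F x + (1 + m : ℕ) := by rw [hlen]; push_cast; ring

lemma IsSublevelEnum.exists_Kc_le_add {U : List Bool →. List Bool} (hU : OptimalDecompressor U)
    (hE : IsSublevelEnum F E) {m : ℕ}
    (hcard : ∀ n, {x | F x < n}.Finite ∧ {x | F x < n}.ncard ≤ 2 ^ (n + m)) :
    ∃ d : ℕ, ∀ x, Kc U x ≤ F x + d := by
  obtain ⟨c, hc⟩ := hU.2 _ (partrec_indexDecompressor hE.computable m)
  refine ⟨1 + m + c, fun x => (hc x).trans ?_⟩
  grw [hE.Kc_indexDecompressor_le hcard x]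
  push_cast
  rw [add_assoc]

end IndexDecompressor

section Greedy

variable {α : Type*} [DecidableEq α]

/-- Label `j` receives the first entry of `L j` not assigned yet. Once some label finds none, the
assignment freezes, so position `j` of the list always belongs to label `j`. -/
def greedyStep (c : List α) (j : ℕ) (l : List α) : List α :=
  if l.length = j then l ++ (c.find? (· ∉ l)).toList else l

def greedy (L : ℕ → List α) : ℕ → List α
  | 0 => []
  | j + 1 => greedyStep (L j) j (greedy L j)

variable {L L' : ℕ → List α}

lemma greedy_succ_of_length_ne {j : ℕ} (h : (greedy L j).length ≠ j) :
    greedy L (j + 1) = greedy L j := if_neg h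

lemma greedy_succ_of_length_eq {j : ℕ} (h : (greedy L j).length = j) :
    greedy L (j + 1) = greedy L j ++ ((L j).find? (· ∉ greedy L j)).toList := if_pos h

lemma length_greedy_le (j : ℕ) : (greedy L j).length ≤ j := by
  induction j with
  | zero => rfl
  | succ j ih =>
    by_cases h : (greedy L j).length = j
    · rw [greedy_succ_of_length_eq h, List.length_append]
      have : ((L j).find? (· ∉ greedy L j)).toList.length ≤ 1 := Option.length_toList_le
      omega
    · rw [greedy_succ_of_length_ne h]
      omega

lemma greedy_prefix_succ (j : ℕ) : greedy L j <+: greedy L (j + 1) := by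
  by_cases h : (greedy L j).length = j
  · rw [greedy_succ_of_length_eq h]
    exact List.prefix_append _ _
  · rw [greedy_succ_of_length_ne h]

lemma greedy_prefix_of_le {j j' : ℕ} (h : j ≤ j') : greedy L j <+: greedy L j' := by
  induction h with
  | refl => exact List.prefix_refl _
  | step _ ih => exact ih.trans (greedy_prefix_succ _)

lemma nodup_greedy (j : ℕ) : (greedy L j).Nodup := by
  induction j with
  | zero => exact List.nodup_nil
  | succ j ih =>
    by_cases h : (greedy L j).length = j
    · rw [greedy_succ_of_length_eq h]
      rcases hf : (L j).find? (· ∉ greedy L j) with _ | a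
      · simpa using ih
      · rw [Option.toList_some, ← List.concat_eq_append]
        exact ih.concat (of_decide_eq_true (List.find?_some (p := (· ∉ greedy L j)) hf))
    · rwa [greedy_succ_of_length_ne h]

lemma mem_of_getElem?_greedy {j i : ℕ} {x : α} (h : (greedy L j)[i]? = some x) : x ∈ L i := by
  induction j with
  | zero => simp [greedy] at h
  | succ j ih =>
    by_cases hlen : (greedy L j).length = j
    · rw [greedy_succ_of_length_eq hlen, List.getElem?_append] at h
      split_ifs at h with hi
      · exact ih h
      · rcases hf : (L j).find? (· ∉ greedy L j) with _ | a <;> rw [hf] at h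
        · simp at h
        · obtain ⟨hi', rfl⟩ := List.getElem?_eq_some_iff.mp h
          obtain rfl : i = j := by
            simp only [Option.toList_some, List.length_singleton] at hi'
            omega
          simpa using List.mem_of_find?_eq_some hf
    · rw [greedy_succ_of_length_ne hlen] at h
      exact ih h

lemma greedy_prefix_greedy (hL : ∀ i, L i <+: L' i) (j : ℕ) : greedy L j <+: greedy L' j := by
  induction j with
  | zero => exact List.prefix_refl _
  | succ j ih =>
    by_cases h : (greedy L j).length = j
    · have heq : greedy L' j = greedy L j := by
        refine (ih.eq_of_length (le_antisymm ih.length_le ?_)).symm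
        have := length_greedy_le (L := L') j
        omega
      rw [greedy_succ_of_length_eq h, greedy_succ_of_length_eq (heq ▸ h), heq]
      rcases hf : (L j).find? (· ∉ greedy L j) with _ | a
      · simp
      · obtain ⟨t, ht⟩ := hL j
        rw [← ht, List.find?_append, hf]
        exact List.prefix_refl _
    · rw [greedy_succ_of_length_ne h]
      exact ih.trans (greedy_prefix_succ j)

lemma length_greedy_succ {j : ℕ} (hlen : (greedy L j).length = j) (hnd : (L j).Nodup)
    (hj : j < (L j).length) : (greedy L (j + 1)).length = j + 1 := by
  have hfresh : ∃ x ∈ L j, x ∉ greedy L j := by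
    by_contra! hsub
    have := (List.subperm_of_subset hnd hsub).length_le
    omega
  obtain ⟨x, hx, hxn⟩ := hfresh
  obtain ⟨a, ha⟩ := Option.isSome_iff_exists.mp
    ((List.find?_isSome (p := (· ∉ greedy L j))).mpr ⟨x, hx, decide_eq_true hxn⟩)
  rw [greedy_succ_of_length_eq hlen, ha]
  simp [hlen]

end Greedy

section StagedGreedy

variable {α : Type*} [DecidableEq α] {L : ℕ → ℕ → List α}

lemma greedy_diag_prefix (hL : ∀ j {s s'}, s ≤ s' → L s j <+: L s' j) {s s' : ℕ} (h : s ≤ s') :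
    greedy (L s) s <+: greedy (L s') s' :=
  (greedy_prefix_greedy (fun j => hL j h) s).trans (greedy_prefix_of_le h)

lemma exists_lt_length_greedy_diag (hL : ∀ j {s s'}, s ≤ s' → L s j <+: L s' j)
    (hnd : ∀ s j, (L s j).Nodup) (hlarge : ∀ j, ∃ s, j < (L s j).length) (j : ℕ) :
    ∃ s, j < (greedy (L s) s).length := by
  have hfull : ∀ j, ∃ s, (greedy (L s) j).length = j := by
    intro j
    induction j with
    | zero => exact ⟨0, rfl⟩
    | succ j ih =>
      obtain ⟨s₁, hs₁⟩ := ih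
      obtain ⟨s₂, hs₂⟩ := hlarge j
      refine ⟨max s₁ s₂, length_greedy_succ ?_ (hnd _ j) ?_⟩
      · have := (greedy_prefix_greedy (L := L s₁) (L' := L (max s₁ s₂))
          (fun i => hL i (le_max_left s₁ s₂)) j).length_le
        have := length_greedy_le (L := L (max s₁ s₂)) j
        omega
      · exact hs₂.trans_le (hL j (le_max_right s₁ s₂)).length_le
  obtain ⟨s, hs⟩ := hfull (j + 1)
  refine ⟨max s (j + 1), ?_⟩
  have := ((greedy_prefix_greedy (L := L s) (L' := L (max s (j + 1)))
    (fun i => hL i (le_max_left s (j + 1))) (j + 1)).trans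
    (greedy_prefix_of_le (le_max_right s (j + 1)))).length_le
  omega

lemma primrec_greedyStep [Primcodable α] :
    Primrec fun q : List α × ℕ × List α => greedyStep q.1 q.2.1 q.2.2 := by
  have hnotMem : PrimrecRel fun (x : α) (l : List α) => x ∉ l :=
    ((PrimrecRel.exists_mem_list Primrec.eq).comp Primrec.snd Primrec.fst).not.of_eq
      fun _ => by simp
  have hfind : Primrec fun q : List α × ℕ × List α => q.1.find? (· ∉ q.2.2) :=
    (Primrec.list_head?.comp (hnotMem.listFilter.comp Primrec.fst (Primrec.snd.comp .snd))).of_eq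
      fun _ => List.head?_filter
  exact Primrec.ite (Primrec.eq.comp (Primrec.list_length.comp (Primrec.snd.comp .snd))
      (Primrec.fst.comp .snd))
    (Primrec.list_append.comp (Primrec.snd.comp .snd) (Primrec.optionToList.comp hfind))
    (Primrec.snd.comp .snd)

lemma computable_greedy_diag [Primcodable α] {L : ℕ → ℕ → List α} (hL : Computable₂ L) :
    Computable fun s => greedy (L s) s := by
  have hstep : Computable₂ fun (s : ℕ) (q : ℕ × List α) => greedyStep (L s q.1) q.1 q.2 :=
    (primrec_greedyStep.to_comp.comp ((hL.comp .fst (Computable.fst.comp .snd)).pair .snd)).to₂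
  refine (Computable.nat_rec .id (.const []) hstep).of_eq fun s => ?_
  have hrec (j : ℕ) :
      Nat.rec (motive := fun _ => List α) [] (fun i l => greedyStep (L s i) i l) j =
        greedy (L s) j := by
    induction j with
    | zero => rfl
    | succ j ih => exact congrArg (greedyStep (L s j) j) ih
  exact hrec s

end StagedGreedy

section LabelDecoder

variable {α β : Type*} [DecidableEq α] [Primcodable β] {G : ℕ → List α} {ℓ : β → ℕ}

/-- Sends `x` to the `y` whose label `ℓ y` is the position of `x` in some `G s`. -/
def labelDecoder (G : ℕ → List α) (ℓ : β → ℕ) : α →. β :=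
  fun x => Nat.rfindOpt fun t => (Encodable.decode (α := β) t.unpair.2).bind fun y =>
    if (G t.unpair.1)[ℓ y]? = some x then some y else none

lemma partrec_labelDecoder [Primcodable α] (hG : Computable G) (hℓ : Computable ℓ) :
    Partrec (labelDecoder G ℓ) := by
  have hc : Computable fun q : (α × ℕ) × β =>
      decide ((G q.1.2.unpair.1)[ℓ q.2]? = some q.1.1) :=
    Primrec.eq.decide.to_comp.comp
      (Computable.list_getElem?.comp
        (hG.comp (Computable.fst.comp (Computable.unpair.comp (Computable.snd.comp .fst))))
        (hℓ.comp .snd))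
      (Computable.option_some.comp (Computable.fst.comp .fst))
  have hg : Computable₂ fun (q : α × ℕ) (y : β) =>
      if (G q.2.unpair.1)[ℓ y]? = some q.1 then some y else none :=
    (Computable.cond hc (Computable.option_some.comp .snd) (.const none)).of_eq
      fun q => by simp only [Bool.cond_decide]
  exact Partrec.rfindOpt (Computable.option_bind
    (Computable.decode.comp (Computable.snd.comp (Computable.unpair.comp .snd))) hg).to₂

lemma mem_labelDecoder (hG : ∀ {s s'}, s ≤ s' → G s <+: G s') (hnd : ∀ s, (G s).Nodup)
    (hℓ : Function.Injective ℓ) {s : ℕ} {x : α} {y : β} (h : (G s)[ℓ y]? = some x) :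
    y ∈ labelDecoder G ℓ x := by
  have hunique {y'} (hy' : y' ∈ labelDecoder G ℓ x) : y' = y := by
    obtain ⟨t, ht⟩ := Nat.rfindOpt_spec hy'
    have hx : (G t.unpair.1)[ℓ y']? = some x := by
      simp only [Option.mem_def, Option.bind_eq_some_iff, Option.ite_none_right_eq_some,
        Option.some.injEq] at ht
      obtain ⟨_, _, hx, rfl⟩ := ht
      exact hx
    rcases le_total s t.unpair.1 with hst | hts
    · exact hℓ ((hnd _).eq_of_getElem?_eq_some hx ((hG hst).getElem?_eq_some h))
    · exact hℓ ((hnd _).eq_of_getElem?_eq_some ((hG hts).getElem?_eq_some hx) h)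
  have hdom : (labelDecoder G ℓ x).Dom :=
    Nat.rfindOpt_dom.mpr ⟨Nat.pair s (Encodable.encode y), y, by simp [h]⟩
  obtain ⟨y', hy'⟩ := Part.dom_iff_mem.mp hdom
  exact hunique hy' ▸ hy'

end LabelDecoder

lemma IsSublevelEnum.exists_le_length_add {F : List Bool → ℕ} {E : ℕ → ℕ → List (List Bool)}
    (hE : IsSublevelEnum F E)
    (hF : ∀ f : List Bool →. List Bool, Partrec f →
      ∃ c : ℕ, ∀ x y : List Bool, y ∈ f x → F y ≤ F x + c)
    {k₀ : ℕ} (hlarge : ∀ n, 2 ^ n ≤ {x | F x < n + k₀}.ncard) :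
    ∃ d : ℕ, ∀ y, F y ≤ y.length + d := by
  -- Label `j` is served from `{x | F x < log₂ j + 1 + k₀}`, which has more than `j` elements;
  -- the label `y.foldr Nat.bit 1` of `y` has `log₂` equal to `y.length`.
  set L : ℕ → ℕ → List (List Bool) := fun s j => E (Nat.log 2 j + 1 + k₀) s
  have hL : ∀ j {s s'}, s ≤ s' → L s j <+: L s' j := fun j _ _ => hE.prefix_of_le _
  have hlarge (j : ℕ) : ∃ s, j < (L s j).length := by
    have hfin :=
      Set.finite_of_ncard_pos ((Nat.two_pow_pos _).trans_le (hlarge (Nat.log 2 j + 1)))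
    obtain ⟨s, hs⟩ := hE.exists_ncard_le_length hfin
    exact ⟨s, ((Nat.lt_pow_succ_log_self one_lt_two j).trans_le (hlarge _)).trans_le hs⟩
  set G : ℕ → List (List Bool) := fun s => greedy (L s) s
  have hG : Computable G := computable_greedy_diag <| hE.computable.comp
    (Primrec.nat_add.comp (Primrec.succ.comp ((Primrec.nat_log 2).comp .snd)) (.const k₀)).to_comp
    .fst
  obtain ⟨c, hc⟩ := hF _ (partrec_labelDecoder (ℓ := fun y : List Bool => y.foldr Nat.bit 1) hG
    (primrec_foldr_bit 1).to_comp)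
  refine ⟨k₀ + c, fun y => ?_⟩
  obtain ⟨s, hs⟩ := exists_lt_length_greedy_diag hL (fun s j => hE.nodup _ s) hlarge
    (y.foldr Nat.bit 1)
  obtain ⟨x, hx⟩ : ∃ x, (G s)[y.foldr Nat.bit 1]? = some x :=
    ⟨_, List.getElem?_eq_getElem hs⟩
  have hFx : F x < y.length + 1 + k₀ := by
    have := (hE.exists_mem_iff _ x).mp ⟨s, mem_of_getElem?_greedy (L := L s) hx⟩
    rwa [log_foldr_bit_one] at this
  have := hc x y (mem_labelDecoder (greedy_diag_prefix hL) (fun _ => nodup_greedy _)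
    foldr_bit_one_injective hx)
  omega

/-- Axiomatic characterization of complexity: a function satisfying
conservation of information (A1), upper semicomputability (A2) and
calibration (A3) coincides with Kolmogorov complexity up to an additive
constant. -/
theorem axioms_characterize_complexity
    (U : List Bool →. List Bool) (hU : OptimalDecompressor U)
    (K' : List Bool → ℕ)
    (hA1 : ∀ f : List Bool →. List Bool, Partrec f →
      ∃ c : ℕ, ∀ x y : List Bool, y ∈ f x → K' y ≤ K' x + c)
    (hA2 : UpperSemicomputable K')
    (hA3 : ∃ c C : ℝ, 0 < c ∧ c ≤ C ∧
      (∀ n : ℕ, {x : List Bool | K' x < n}.Finite ∧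
        ({x : List Bool | K' x < n}.ncard : ℝ) ≤ C * 2 ^ n) ∧
      (∃ N : ℕ, ∀ n ≥ N, c * 2 ^ n ≤ ({x : List Bool | K' x < n}.ncard : ℝ))) :
    ∃ d : ℕ, ∀ x : List Bool,
      Kc U x ≤ (K' x : ℕ∞) + (d : ℕ∞) ∧ (K' x : ℕ∞) ≤ Kc U x + (d : ℕ∞) := by
  obtain ⟨E, hE⟩ := hA2.exists_isSublevelEnum
  obtain ⟨c, C, hc, -, hupper, N, hlower⟩ := hA3
  obtain ⟨m, hm⟩ := exists_le_two_pow_add fun n => (hupper n).2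
  obtain ⟨d₁, hd₁⟩ := hE.exists_Kc_le_add hU fun n => ⟨(hupper n).1, hm n⟩
  obtain ⟨k₀, hk₀⟩ := exists_two_pow_le_add hc hlower
  obtain ⟨d₂, hd₂⟩ := hE.exists_le_length_add hA1 hk₀
  obtain ⟨cU, hcU⟩ := hA1 U hU.1
  refine ⟨max d₁ (d₂ + cU), fun x => ⟨(hd₁ x).trans ?_, le_Kc_add fun p hp => ?_⟩⟩
  · gcongr
    exact_mod_cast le_max_left _ _
  · have := hcU p x hp
    have := hd₂ p
    omega
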